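/- (Compactness from matrix decay) Let M : ℝ^{2d} → (0,∞) be a tempered weight with M(u) → 0 as ‖u‖ → ∞, and let (K_{\tilde α, \tilde β})_{\tilde α, \tilde β ∈ ℤ^{2d}} satisfy, for every n ∈ ℕ, |K_{\tilde α, \tilde β}| ≤ C_n ⟨\tilde α − \tilde β⟩^{−n} M(\tilde α) for all \tilde α, \tilde β and some C_n > 0. Then the induced operator on ℓ²(ℤ^{2d}), (c_{\tilde β}) ↦ (Σ_{\tilde β} K_{\tilde α, \tilde β} c_{\tilde β})_{\tilde α}, is compact. -/

import Mathlib

open Real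

/-- Embedding of the lattice `ℤ^{2d}` into `ℝ^{2d}`. -/
noncomputable def latt2 {d : ℕ} (α : Fin (2 * d) → ℤ) : EuclideanSpace ℝ (Fin (2 * d)) :=
  WithLp.toLp 2 (fun i => (α i : ℝ))

/-- Japanese bracket `⟨v⟩ = √(1 + ‖v‖²)` on `ℝ^{2d}`. -/
noncomputable def jb {d : ℕ} (v : EuclideanSpace ℝ (Fin (2 * d))) : ℝ :=
  Real.sqrt (1 + ‖v‖ ^ 2)


/-!
Write `K α β = M(α) · K' α β`. The bound for `n = 4d` makes `K'` dominated by the convolution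
kernel `C ⟨α - β⟩^{-4d}`, which is summable over `ℤ^{2d}` because
`⟨γ⟩^{-4d} = (1 + ‖γ‖²)^{-2d} ≤ ∏ᵢ (1 + γᵢ²)⁻¹`; by the Schur test `K'` is bounded on `ℓ²`.
Multiplication by `M(α)`, a sequence tending to zero since lattice points leave every ball, is
the norm limit of its finite-rank truncations, hence compact, and so is the composite `K`.
-/

open Filter Topology
open scoped ENNReal NNReal lp

namespace ENNReal
variable {ι κ : Type*}

theorem tsum_mul_sq_le (w f : ι → ℝ≥0∞) :
    (∑' i, w i * f i) ^ 2 ≤ (∑' i, w i) * ∑' i, w i * f i ^ 2 := by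
  have hsqrt : ∑' i, w i * f i ≤
      (∑' i, w i) ^ (2⁻¹ : ℝ) * (∑' i, w i * f i ^ 2) ^ (2⁻¹ : ℝ) := by
    rw [ENNReal.tsum_eq_iSup_sum]
    refine iSup_le fun s => ?_
    have h := inner_le_weight_mul_Lp_of_nonneg s (p := 2) one_le_two w f
    rw [show (1 : ℝ) - 2⁻¹ = 2⁻¹ by norm_num] at h
    simp only [rpow_two] at h
    refine h.trans (mul_le_mul' ?_ ?_) <;>
      exact rpow_le_rpow (ENNReal.sum_le_tsum s) (by norm_num)
  calc (∑' i, w i * f i) ^ 2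
      ≤ ((∑' i, w i) ^ (2⁻¹ : ℝ) * (∑' i, w i * f i ^ 2) ^ (2⁻¹ : ℝ)) ^ 2 := by gcongr
    _ = (∑' i, w i) * ∑' i, w i * f i ^ 2 := by
      rw [mul_pow, ← rpow_two, ← rpow_two, ← rpow_mul, ← rpow_mul]; norm_num

theorem tsum_sq_tsum_mul_le (A : ι → κ → ℝ≥0∞) {S : ℝ≥0∞}
    (hrow : ∀ i, ∑' j, A i j ≤ S) (hcol : ∀ j, ∑' i, A i j ≤ S) (e : κ → ℝ≥0∞) :
    ∑' i, (∑' j, A i j * e j) ^ 2 ≤ S ^ 2 * ∑' j, e j ^ 2 :=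
  calc ∑' i, (∑' j, A i j * e j) ^ 2
      ≤ ∑' i, S * ∑' j, A i j * e j ^ 2 := by
        gcongr with i
        exact (tsum_mul_sq_le _ _).trans (by gcongr; exact hrow i)
    _ = S * ∑' j, (∑' i, A i j) * e j ^ 2 := by
        rw [ENNReal.tsum_mul_left, ENNReal.tsum_comm]
        simp_rw [ENNReal.tsum_mul_right]
    _ ≤ S * ∑' j, S * e j ^ 2 := by gcongr with j; exact hcol j
    _ = S ^ 2 * ∑' j, e j ^ 2 := by rw [ENNReal.tsum_mul_left, ← mul_assoc, sq]

end ENNReal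

namespace lp
variable {ι κ 𝕜 : Type*} [RCLike 𝕜]

theorem tsum_enorm_sq (c : ℓ²(κ, 𝕜)) : ∑' j, ‖c j‖ₑ ^ 2 = ENNReal.ofReal (‖c‖ ^ 2) := by
  have h := lp.norm_rpow_eq_tsum (p := 2) (by norm_num) c
  simp only [ENNReal.toReal_ofNat, Real.rpow_two] at h
  rw [h, ENNReal.ofReal_tsum_of_nonneg (fun j => by positivity)]
  · simp [← ofReal_norm, ENNReal.ofReal_pow]
  · simpa using (lp.memℓp c).summable (p := 2) (by norm_num)

variable {A : ι → κ → 𝕜} {S : ℝ≥0}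

theorem summable_mul_of_tsum_enorm_le {i : ι} (hrow : ∑' j, ‖A i j‖ₑ ≤ S) (c : ℓ²(κ, 𝕜)) :
    Summable fun j => A i j * c j := by
  refine .of_enorm (ne_top_of_le_ne_top (b := S * ‖c‖ₑ) (by finiteness) ?_)
  calc ∑' j, ‖A i j * c j‖ₑ ≤ ∑' j, ‖A i j‖ₑ * ‖c‖ₑ := by
        gcongr with j
        rw [enorm_mul]
        gcongr
        rw [enorm_le_iff_norm_le]
        exact lp.norm_apply_le_norm two_ne_zero c j
    _ ≤ S * ‖c‖ₑ := by rw [ENNReal.tsum_mul_right]; gcongr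

theorem sum_norm_tsum_mul_sq_le (hrow : ∀ i, ∑' j, ‖A i j‖ₑ ≤ S)
    (hcol : ∀ j, ∑' i, ‖A i j‖ₑ ≤ S) (c : ℓ²(κ, 𝕜)) (s : Finset ι) :
    ∑ i ∈ s, ‖∑' j, A i j * c j‖ ^ 2 ≤ (S * ‖c‖) ^ 2 := by
  rw [← ENNReal.ofReal_le_ofReal_iff (by positivity), ENNReal.ofReal_sum_of_nonneg
    (fun i _ => by positivity)]
  calc ∑ i ∈ s, ENNReal.ofReal (‖∑' j, A i j * c j‖ ^ 2)
      ≤ ∑' i, (∑' j, ‖A i j‖ₑ * ‖c j‖ₑ) ^ 2 := by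
        refine (ENNReal.sum_le_tsum s).trans' ?_
        gcongr with i
        rw [ENNReal.ofReal_pow (norm_nonneg _), ofReal_norm]
        gcongr
        simpa only [enorm_mul] using enorm_tsum_le_tsum_enorm (f := fun j => A i j * c j)
    _ ≤ (S : ℝ≥0∞) ^ 2 * ∑' j, ‖c j‖ₑ ^ 2 :=
        ENNReal.tsum_sq_tsum_mul_le _ hrow hcol _
    _ = ENNReal.ofReal ((S * ‖c‖) ^ 2) := by
        rw [tsum_enorm_sq, mul_pow, ENNReal.ofReal_mul (by positivity), ENNReal.ofReal_pow
          S.coe_nonneg, ENNReal.ofReal_coe_nnreal]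

variable (A S) in
theorem exists_clm_of_schur (hrow : ∀ i, ∑' j, ‖A i j‖ₑ ≤ S) (hcol : ∀ j, ∑' i, ‖A i j‖ₑ ≤ S) :
    ∃ T : ℓ²(κ, 𝕜) →L[𝕜] ℓ²(ι, 𝕜), ∀ c i, T c i = ∑' j, A i j * c j := by
  have hsq (c : ℓ²(κ, 𝕜)) (s : Finset ι) :
      ∑ i ∈ s, ‖∑' j, A i j * c j‖ ^ (2 : ℝ≥0∞).toReal ≤ (S * ‖c‖) ^ (2 : ℝ≥0∞).toReal := by
    simpa using sum_norm_tsum_mul_sq_le hrow hcol c s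
  let L : ℓ²(κ, 𝕜) →ₗ[𝕜] ℓ²(ι, 𝕜) :=
    { toFun c := ⟨fun i => ∑' j, A i j * c j, memℓp_gen' (hsq c)⟩
      map_add' c c' := by
        ext i
        simp only [coeFn_add, Pi.add_apply, mul_add]
        exact (summable_mul_of_tsum_enorm_le (hrow i) c).tsum_add
          (summable_mul_of_tsum_enorm_le (hrow i) c')
      map_smul' a c := by
        ext i
        simp only [coeFn_smul, Pi.smul_apply, smul_eq_mul, RingHom.id_apply, ← tsum_mul_left]
        exact tsum_congr fun j => by ring }
  refine ⟨L.mkContinuous S fun c => norm_le_of_forall_sum_le (by norm_num) (by positivity)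
    (hsq c), fun c i => rfl⟩

theorem exists_clm_of_norm_le_conv {G : Type*} [AddGroup G] (A : G → G → 𝕜) (w : G → ℝ)
    (hw : Summable w) (hA : ∀ i j, ‖A i j‖ ≤ w (i - j)) :
    ∃ T : ℓ²(G, 𝕜) →L[𝕜] ℓ²(G, 𝕜), ∀ c i, T c i = ∑' j, A i j * c j := by
  have hw0 (γ : G) : 0 ≤ w γ := (norm_nonneg _).trans (by simpa using hA γ 0)
  have hAw (i j : G) : ‖A i j‖ₑ ≤ ENNReal.ofReal (w (i - j)) := by
    rw [← ofReal_norm]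
    exact ENNReal.ofReal_le_ofReal (hA i j)
  have hsum : ∑' γ, ENNReal.ofReal (w γ) = (∑' γ, w γ).toNNReal :=
    (ENNReal.ofReal_tsum_of_nonneg hw0 hw).symm
  refine exists_clm_of_schur A (∑' γ, w γ).toNNReal (fun i => ?_) (fun j => ?_)
  · calc ∑' j, ‖A i j‖ₑ ≤ ∑' j, ENNReal.ofReal (w (i - j)) := ENNReal.tsum_le_tsum (hAw i)
      _ = _ := ((Equiv.subLeft i).tsum_eq (fun γ => ENNReal.ofReal (w γ))).trans hsum
  · calc ∑' i, ‖A i j‖ₑ ≤ ∑' i, ENNReal.ofReal (w (i - j)) := ENNReal.tsum_le_tsum (hAw · j)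
      _ = _ := ((Equiv.subRight j).tsum_eq (fun γ => ENNReal.ofReal (w γ))).trans hsum

theorem isCompactOperator_of_forall_norm_sub_sum_single_le [DecidableEq ι] {E : Type*}
    [NormedAddCommGroup E] [NormedSpace 𝕜 E] (T : E →L[𝕜] ℓ²(ι, 𝕜))
    (h : ∀ ε > 0, ∃ s : Finset ι, ∀ x, ‖T x - ∑ i ∈ s, lp.single 2 i (T x i)‖ ≤ ε * ‖x‖) :
    IsCompactOperator T := by
  let P (s : Finset ι) : E →L[𝕜] ℓ²(ι, 𝕜) :=
    ∑ i ∈ s, (singleContinuousLinearMap 𝕜 (fun _ => 𝕜) 2 i).comp ((evalCLM 𝕜 _ 2 i).comp T)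
  have hP (s : Finset ι) : IsCompactOperator (P s) :=
    Submodule.sum_mem (compactOperator (RingHom.id 𝕜) E ℓ²(ι, 𝕜)) fun i _ =>
      (isCompactOperator_of_locallyCompactSpace_dom ((evalCLM 𝕜 _ 2 i).comp T)).clm_comp
        (singleContinuousLinearMap 𝕜 (fun _ => 𝕜) 2 i)
  refine isClosed_setOfPred_isCompactOperator.closure_subset
    (Metric.mem_closure_iff.mpr fun ε hε => ?_)
  obtain ⟨s, hs⟩ := h (ε / 2) (half_pos hε)
  refine ⟨P s, hP s, ?_⟩
  rw [dist_eq_norm]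
  refine (ContinuousLinearMap.opNorm_le_bound _ (half_pos hε).le fun x => ?_).trans_lt
    (half_lt_self hε)
  simpa [P, evalCLM] using hs x

theorem exists_isCompactOperator_mul_of_tendsto_zero {m : ι → 𝕜}
    (hm : Tendsto m cofinite (𝓝 0)) :
    ∃ D : ℓ²(ι, 𝕜) →L[𝕜] ℓ²(ι, 𝕜), (∀ c i, D c i = m i * c i) ∧ IsCompactOperator D := by
  classical
  obtain ⟨B, hB⟩ := hm.norm.bddAbove_range_of_cofinite
  have hmB (i : ι) : ‖ContinuousLinearMap.mul 𝕜 𝕜 (m i)‖ ≤ max B 0 :=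
    (ContinuousLinearMap.opNorm_mul_apply_le _ _ _).trans ((hB ⟨i, rfl⟩).trans (le_max_left _ _))
  let D := mapCLM 2 (fun i => ContinuousLinearMap.mul 𝕜 𝕜 (m i)) (le_max_right B 0) hmB
  refine ⟨D, fun c i => rfl, isCompactOperator_of_forall_norm_sub_sum_single_le D fun ε hε => ?_⟩
  have hfin : {i | ε ≤ ‖m i‖}.Finite := by
    simpa using eventually_cofinite.mp (hm.norm.eventually (gt_mem_nhds (by simpa using hε)))
  refine ⟨hfin.toFinset, fun x => ?_⟩
  calc ‖D x - ∑ i ∈ hfin.toFinset, lp.single 2 i (D x i)‖ ≤ ‖(ε : 𝕜) • x‖ := by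
        refine norm_mono two_ne_zero fun j => ?_
        simp only [coeFn_sub, coeFn_sum, lp.coeFn_single, Pi.sub_apply, Finset.sum_apply,
          Finset.sum_pi_single, coeFn_smul, Pi.smul_apply, smul_eq_mul, norm_mul,
          RCLike.norm_ofReal, abs_of_pos hε]
        split_ifs with hj
        · simpa using mul_nonneg hε.le (norm_nonneg (x j))
        · rw [sub_zero]
          exact (norm_mul_le _ _).trans (by gcongr; exact (not_le.mp (by simpa using hj)).le)
    _ = ε * ‖x‖ := by rw [norm_const_smul two_ne_zero, RCLike.norm_ofReal, abs_of_pos hε]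

end lp

theorem summable_pi_prod {ι κ : Type*} [Fintype ι] {g : κ → ℝ} (hg0 : 0 ≤ g) (hg : Summable g) :
    Summable fun x : ι → κ => ∏ i, g (x i) := by
  classical
  refine summable_of_sum_le (c := ∏ _i : ι, ∑' k, g k)
    (fun x => Finset.prod_nonneg fun i _ => hg0 _) fun s => ?_
  calc ∑ x ∈ s, ∏ i, g (x i)
      ≤ ∑ x ∈ Fintype.piFinset fun i => s.image (· i), ∏ i, g (x i) :=
        Finset.sum_le_sum_of_subset_of_nonneg
          (fun x hx => Fintype.mem_piFinset.mpr fun i => Finset.mem_image_of_mem _ hx)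
          fun x _ _ => Finset.prod_nonneg fun i _ => hg0 _
    _ = ∏ i, ∑ k ∈ s.image (· i), g k := (Finset.prod_univ_sum _ _).symm
    _ ≤ ∏ i, ∑' k, g k := Finset.prod_le_prod (fun i _ => Finset.sum_nonneg fun k _ => hg0 k)
        fun i _ => hg.sum_le_tsum _ fun k _ => hg0 k

theorem summable_inv_one_add_sq_int : Summable fun m : ℤ => (1 + (m : ℝ) ^ 2)⁻¹ := by
  refine (Real.summable_one_div_int_pow.mpr one_lt_two).of_norm_bounded_eventually ?_
  filter_upwards [eventually_cofinite_ne 0] with m hm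
  rw [norm_inv, Real.norm_of_nonneg (by positivity), one_div]
  have : (1 : ℝ) ≤ (m : ℝ) ^ 2 := by
    exact_mod_cast (one_le_sq_iff_one_le_abs _).mpr (Int.one_le_abs hm)
  exact inv_anti₀ (by positivity) (by linarith)

section Lattice
variable {d : ℕ}

theorem latt2_sub (α β : Fin (2 * d) → ℤ) : latt2 α - latt2 β = latt2 (α - β) := by
  ext i
  simp [latt2]

theorem tendsto_latt2_cofinite : Tendsto (latt2 (d := d)) cofinite (cocompact _) := by
  have h := Tendsto.pi_map_coprodᵢ fun _ : Fin (2 * d) => Int.tendsto_coe_cofinite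
  rw [coprodᵢ_cofinite, coprodᵢ_cocompact] at h
  exact (PiLp.homeomorph 2 _).symm.map_cocompact.le.trans' (tendsto_map.comp h)

theorem jb_latt2_rpow_neg_le_prod (γ : Fin (2 * d) → ℤ) :
    jb (latt2 γ) ^ (-((4 * d : ℕ) : ℝ)) ≤ ∏ i, (1 + (γ i : ℝ) ^ 2)⁻¹ := by
  set Q := 1 + ‖latt2 γ‖ ^ 2
  have hQ : 0 ≤ Q := by positivity
  have hcoord (i : Fin (2 * d)) : 1 + (γ i : ℝ) ^ 2 ≤ Q := by
    have h := Finset.single_le_sum (fun j _ => sq_nonneg ‖latt2 γ j‖) (Finset.mem_univ i)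
    rw [← EuclideanSpace.norm_sq_eq] at h
    simpa [Q, latt2] using h
  calc jb (latt2 γ) ^ (-((4 * d : ℕ) : ℝ)) = (∏ _i : Fin (2 * d), Q)⁻¹ := by
        rw [jb, Real.sqrt_eq_rpow, ← Real.rpow_mul hQ, Finset.prod_const, Finset.card_univ,
          Fintype.card_fin, ← Real.rpow_natCast, ← Real.rpow_neg hQ]
        push_cast
        ring_nf
    _ ≤ (∏ i, (1 + (γ i : ℝ) ^ 2))⁻¹ :=
        inv_anti₀ (by positivity) (Finset.prod_le_prod (fun i _ => by positivity) fun i _ =>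
          hcoord i)
    _ = ∏ i, (1 + (γ i : ℝ) ^ 2)⁻¹ := (Finset.prod_inv_distrib _).symm

theorem summable_jb_latt2_rpow_neg :
    Summable fun γ : Fin (2 * d) → ℤ => jb (latt2 γ) ^ (-((4 * d : ℕ) : ℝ)) :=
  (summable_pi_prod (fun m => by positivity) summable_inv_one_add_sq_int).of_nonneg_of_le
    (fun γ => Real.rpow_nonneg (Real.sqrt_nonneg _) _) jb_latt2_rpow_neg_le_prod

end Lattice

theorem stmt14_general {d : ℕ}
    (M : EuclideanSpace ℝ (Fin (2 * d)) → ℝ)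
    (hMpos : ∀ u, 0 < M u)
    (hMdecay : ∀ ε : ℝ, 0 < ε → ∃ R : ℝ, ∀ u, R ≤ ‖u‖ → M u < ε)
    (K : (Fin (2 * d) → ℤ) → (Fin (2 * d) → ℤ) → ℂ)
    (hK : ∀ n : ℕ, ∃ Cn : ℝ, 0 < Cn ∧ ∀ α β : Fin (2 * d) → ℤ,
      ‖K α β‖ ≤ Cn * jb (latt2 α - latt2 β) ^ (-(n : ℝ)) * M (latt2 α)) :
    ∃ T : lp (fun _ : Fin (2 * d) → ℤ => ℂ) 2 →L[ℂ] lp (fun _ : Fin (2 * d) → ℤ => ℂ) 2,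
      (∀ (c : lp (fun _ : Fin (2 * d) → ℤ => ℂ) 2) (α : Fin (2 * d) → ℤ),
        (T c : ∀ _ : Fin (2 * d) → ℤ, ℂ) α =
          ∑' β : Fin (2 * d) → ℤ, K α β * (c : ∀ _ : Fin (2 * d) → ℤ, ℂ) β) ∧
      IsCompactOperator T := by
  obtain ⟨C, -, hKC⟩ := hK (4 * d)
  have hMlatt : Tendsto (fun α => M (latt2 α)) cofinite (𝓝 0) := by
    refine Metric.tendsto_nhds.mpr fun ε hε => ?_
    obtain ⟨R, hR⟩ := hMdecay ε hε
    filter_upwards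
      [(tendsto_norm_cocompact_atTop.comp tendsto_latt2_cofinite).eventually_ge_atTop R] with α hα
    simpa [abs_of_pos (hMpos _)] using hR _ hα
  obtain ⟨D, hD, hDcpt⟩ :=
    lp.exists_isCompactOperator_mul_of_tendsto_zero (by simpa using hMlatt.ofReal)
  obtain ⟨T, hT⟩ := lp.exists_clm_of_norm_le_conv (fun α β => K α β / M (latt2 α))
    (fun γ => C * jb (latt2 γ) ^ (-((4 * d : ℕ) : ℝ))) (summable_jb_latt2_rpow_neg.mul_left C)
    fun α β => by
      rw [norm_div, Complex.norm_real, Real.norm_of_nonneg (hMpos _).le, div_le_iff₀ (hMpos _)]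
      simpa only [latt2_sub] using hKC α β
  refine ⟨D.comp T, fun c α => ?_, hDcpt.comp_clm T⟩
  rw [ContinuousLinearMap.comp_apply, hD, hT, ← tsum_mul_left]
  exact tsum_congr fun β => by field_simp [(hMpos (latt2 α)).ne']

/-- Compactness from matrix decay: if `M` is a tempered weight tending to `0`
at infinity and `|K_{αβ}| ≤ C_n ⟨α-β⟩^{-n} M(α)` for every `n`, then the induced
operator on `ℓ²(ℤ^{2d})` is compact. -/
theorem stmt14 {d : ℕ}
    (M : EuclideanSpace ℝ (Fin (2 * d)) → ℝ)
    (hMpos : ∀ u, 0 < M u)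
    (hMtemp : ∃ a C : ℝ, 0 < a ∧ 0 < C ∧ ∀ u v, M (u + v) ≤ C * M u * jb v ^ a)
    (hMdecay : ∀ ε : ℝ, 0 < ε → ∃ R : ℝ, ∀ u, R ≤ ‖u‖ → M u < ε)
    (K : (Fin (2 * d) → ℤ) → (Fin (2 * d) → ℤ) → ℂ)
    (hK : ∀ n : ℕ, ∃ Cn : ℝ, 0 < Cn ∧ ∀ α β : Fin (2 * d) → ℤ,
      ‖K α β‖ ≤ Cn * jb (latt2 α - latt2 β) ^ (-(n : ℝ)) * M (latt2 α)) :
    ∃ T : lp (fun _ : Fin (2 * d) → ℤ => ℂ) 2 →L[ℂ] lp (fun _ : Fin (2 * d) → ℤ => ℂ) 2,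
      (∀ (c : lp (fun _ : Fin (2 * d) → ℤ => ℂ) 2) (α : Fin (2 * d) → ℤ),
        (T c : ∀ _ : Fin (2 * d) → ℤ, ℂ) α =
          ∑' β : Fin (2 * d) → ℤ, K α β * (c : ∀ _ : Fin (2 * d) → ℤ, ℂ) β) ∧
      IsCompactOperator T :=
  stmt14_general M hMpos hMdecay K hK
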